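/- arXiv:2003.14182 — 4 statements merged into one kernel-verified Lean document; each statement's English description precedes it below -/
import Mathlib

section
/- Let K and E be full-dimensional convex bodies in ℝⁿ and let −r(K;E) < λ₀ < λ₁ < ∞. Then K_{λ₀} is homothetic to K_{λ₁} if and only if K_{λ₁} is homothetic to a tangential body of E. -/
/-!
Write `L = K_{λ₁}` and `δ = λ₁ - λ₀`, so that `K_{λ₀} = L ∼ δE`.

If `L ∼ δE = αL + x`, then `αL + x + δE ⊆ L`; comparing the width of both sides in a direction
in which `E` has positive width gives `α < 1`. The contraction `p ↦ αp + x + δe` then has the fixed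
point `c + ρe` (`ρ = δ/(1-α)`), which lies in `L`, so `c + ρE ⊆ L`. At a boundary point `q` of `L`
some `αq + x + δe` is a boundary point of `L` too, and the supporting hyperplane there also
supports `L` at `q` and `c + ρE` at `c + ρe`. Hence `ρ⁻¹(L - c)` is a tangential body of `E`.

Conversely, a tangential body `T` of `E` is cut out by hyperplanes supporting both `T` and `E`,
which gives `T ∼ sE = (1-s)T` for `0 ≤ s < 1` and forbids copies `σE + x ⊆ T` with `σ > 1`. If
`L = βT + y`, then `L ∼ δE = β(T ∼ (δ/β)E) + y`, and its nonempty interior forces `δ/β < 1`.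
-/

open scoped Pointwise RealInnerProductSpace
open Metric MeasureTheory

/-- Euclidean n-space. -/
abbrev Eucl (n : ℕ) := EuclideanSpace ℝ (Fin n)

/-- Support function h_K(u) = sup {⟨x,u⟩ : x ∈ K}. -/
noncomputable def suppFn {n : ℕ} (K : Set (Eucl n)) (u : Eucl n) : ℝ :=
  sSup ((fun x => (inner ℝ x u : ℝ)) '' K)

/-- Closed halfspace H⁻_{u,α} = {x : ⟨x,u⟩ ≤ α}. -/
def halfspace {n : ℕ} (u : Eucl n) (α : ℝ) : Set (Eucl n) := {x | (inner ℝ x u : ℝ) ≤ α}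

/-- Minkowski difference M ∼ N = {x : N + x ⊆ M}. -/
def mdiff {n : ℕ} (M N : Set (Eucl n)) : Set (Eucl n) := {x | N + {x} ⊆ M}

/-- Relative inradius r(K;E) = sup {r ≥ 0 : ∃ x, x + r•E ⊆ K}. -/
noncomputable def inradius {n : ℕ} (K E : Set (Eucl n)) : ℝ :=
  sSup {r : ℝ | 0 ≤ r ∧ ∃ x : Eucl n, r • E + {x} ⊆ K}

/-- Inner (λ ≤ 0) and outer (λ ≥ 0) parallel bodies K_λ of K relative to E. -/
noncomputable def parallelBody {n : ℕ} (K E : Set (Eucl n)) (l : ℝ) : Set (Eucl n) :=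
  if l ≤ 0 then mdiff K (|l| • E) else K + l • E

/-- A is homothetic to B: A = α•B + x for some α > 0 and x. -/
def Homothetic {n : ℕ} (A B : Set (Eucl n)) : Prop :=
  ∃ α : ℝ, 0 < α ∧ ∃ x : Eucl n, A = α • B + {x}

/-- The hyperplane {x : ⟨x,u⟩ = α} supports M: it meets M and M lies in one of the
two closed halfspaces bounded by it. -/
def SupportsHyp {n : ℕ} (u : Eucl n) (α : ℝ) (M : Set (Eucl n)) : Prop :=
  (M ∩ {x | (inner ℝ x u : ℝ) = α}).Nonempty ∧
    (M ⊆ {x | (inner ℝ x u : ℝ) ≤ α} ∨ M ⊆ {x | α ≤ (inner ℝ x u : ℝ)})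

/-- K is a tangential body of E: E ⊆ K and through every boundary point of K there is a
supporting hyperplane of K that also supports E. -/
def IsTangentialBody {n : ℕ} (K E : Set (Eucl n)) : Prop :=
  E ⊆ K ∧ ∀ p ∈ frontier K, ∃ u : Eucl n, u ≠ 0 ∧ ∃ α : ℝ,
    (inner ℝ p u : ℝ) = α ∧ SupportsHyp u α K ∧ SupportsHyp u α E

/-- Ω determines K: K is the intersection of the halfspaces with normals in Ω at heights h_K. -/
def Determines {n : ℕ} (Ω K : Set (Eucl n)) : Prop :=
  K = ⋂ u ∈ Ω, halfspace u (suppFn K u)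

/-- The Wulff shape K(Ω,λ) = ⋂_{u ∈ Ω} H⁻_{u, h_K(u) + λ h_E(u)}. -/
noncomputable def wulff {n : ℕ} (K E Ω : Set (Eucl n)) (l : ℝ) : Set (Eucl n) :=
  ⋂ u ∈ Ω, halfspace u (suppFn K u + l * suppFn E u)

/-- E^Ω = ⋂_{u ∈ Ω} H⁻_{u, h_E(u)}. -/
noncomputable def tangBody {n : ℕ} (E Ω : Set (Eucl n)) : Set (Eucl n) :=
  ⋂ u ∈ Ω, halfspace u (suppFn E u)

open Filter Topology Set

lemma IsPreconnected.inter_frontier_nonempty {X : Type*} [TopologicalSpace X] {s t : Set X}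
    (hs : IsPreconnected s) (hst : (s ∩ t).Nonempty) (hs_t : (s \ t).Nonempty) :
    (s ∩ frontier t).Nonempty := by
  rw [frontier_eq_closure_inter_closure]
  refine isPreconnected_closed_iff.1 hs _ _ isClosed_closure isClosed_closure ?_
    (hst.mono (inter_subset_inter_right _ subset_closure))
    (hs_t.mono fun x hx => ⟨hx.1, subset_closure hx.2⟩)
  rw [← closure_union, union_compl_self, closure_univ]
  exact subset_univ s

section InnerProductSpace

variable {V : Type*} [NormedAddCommGroup V] [InnerProductSpace ℝ V]

lemma Set.nontrivial_of_interior_nonempty [Nontrivial V] {E : Set V}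
    (h : (interior E).Nonempty) : E.Nontrivial := by
  obtain ⟨e, he⟩ := h
  by_contra hE
  rw [not_nontrivial_iff] at hE
  rw [hE.eq_singleton_of_mem (interior_subset he), interior_singleton] at he
  exact he

lemma inner_lt_of_mem_interior {T : Set V} {u : V} {α : ℝ} (hu : u ≠ 0)
    (hT : ∀ x ∈ T, ⟪x, u⟫ ≤ α) {z : V} (hz : z ∈ interior T) : ⟪z, u⟫ < α := by
  have hray : Tendsto (fun t : ℝ => z + t • u) (𝓝[>] 0) (𝓝 z) :=
    (Continuous.tendsto' (by fun_prop) 0 z (by simp)).mono_left nhdsWithin_le_nhds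
  obtain ⟨t, ht, ht0⟩ :=
    ((hray.eventually (mem_interior_iff_mem_nhds.1 hz)).and self_mem_nhdsWithin).exists
  have h := hT _ ht
  rw [inner_add_left, real_inner_smul_left] at h
  nlinarith [real_inner_self_pos.2 hu, ht0]

lemma Convex.exists_inner_le_of_notMem_interior [CompleteSpace V] {A : Set V}
    (hA : Convex ℝ A) (hAi : (interior A).Nonempty) {p : V} (hp : p ∉ interior A) :
    ∃ u ≠ 0, ∀ a ∈ A, ⟪a, u⟫ ≤ ⟪p, u⟫ := by
  obtain ⟨f, hf, hfA⟩ := geometric_hahn_banach_of_nonempty_interior_point hA hp hAi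
  refine ⟨(InnerProductSpace.toDual ℝ V).symm f, by simpa using hf, fun a ha => ?_⟩
  simpa only [real_inner_comm ((InnerProductSpace.toDual ℝ V).symm f),
    InnerProductSpace.toDual_symm_apply] using hfA a ha

lemma lt_one_of_forall_smul_add_smul_mem {L E : Set V} (hL : IsCompact L) (hLne : L.Nonempty)
    (hE : E.Nontrivial) {α δ : ℝ} (hδ : 0 < δ) {x : V}
    (h : ∀ p ∈ L, ∀ e ∈ E, α • p + x + δ • e ∈ L) : α < 1 := by
  obtain ⟨e₁, he₁, e₂, he₂, hne⟩ := hE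
  have hu : 0 < ⟪e₁, e₁ - e₂⟫ - ⟪e₂, e₁ - e₂⟫ := by
    rw [← inner_sub_left]
    exact real_inner_self_pos.2 (sub_ne_zero.2 hne)
  have hcont : Continuous fun y : V => ⟪y, e₁ - e₂⟫ := continuous_id.inner continuous_const
  obtain ⟨p, hp, hmax⟩ := hL.exists_isMaxOn hLne hcont.continuousOn
  obtain ⟨q, hq, hmin⟩ := hL.exists_isMinOn hLne hcont.continuousOn
  have h₁ : ⟪α • p + x + δ • e₁, e₁ - e₂⟫ ≤ ⟪p, e₁ - e₂⟫ := hmax (h p hp e₁ he₁)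
  have h₂ : ⟪q, e₁ - e₂⟫ ≤ ⟪α • q + x + δ • e₂, e₁ - e₂⟫ := hmin (h q hq e₂ he₂)
  have h₃ : ⟪q, e₁ - e₂⟫ ≤ ⟪p, e₁ - e₂⟫ := hmax hq
  simp only [inner_add_left, real_inner_smul_left] at h₁ h₂
  by_contra! hα
  nlinarith [mul_nonneg (sub_nonneg.2 hα) (sub_nonneg.2 h₃), mul_pos hδ hu]

lemma mem_of_forall_add_smul_sub_mem {L : Set V} (hL : IsClosed L) (hLne : L.Nonempty) {α : ℝ}
    (hα₀ : 0 ≤ α) (hα₁ : α < 1) {q : V} (h : ∀ p ∈ L, q + α • (p - q) ∈ L) : q ∈ L := by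
  obtain ⟨p, hp⟩ := hLne
  have hmem : ∀ k : ℕ, q + α ^ k • (p - q) ∈ L := by
    intro k
    induction k with
    | zero => simpa using hp
    | succ k ih => simpa [pow_succ', mul_smul] using h _ ih
  have hlim : Tendsto (fun k : ℕ => q + α ^ k • (p - q)) atTop (𝓝 q) := by
    simpa using ((tendsto_pow_atTop_nhds_zero_of_lt_one hα₀ hα₁).smul_const (p - q)).const_add q
  exact hL.mem_of_tendsto hlim (Eventually.of_forall hmem)

lemma exists_pos_smul_add_singleton_subset {E M : Set V} {w : V} (hE : Bornology.IsBounded E)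
    (hM : M ∈ 𝓝 w) : ∃ t : ℝ, 0 < t ∧ t • E + {w} ⊆ M := by
  have hsmall : Tendsto (· • E : ℝ → Set V) (𝓝 0) (𝓝 0).smallSets :=
    (NormedSpace.isVonNBounded_iff ℝ).2 hE |>.tendsto_smallSets_nhds
  have hU : (· + w) ⁻¹' M ∈ 𝓝 (0 : V) := by
    apply (continuous_id.add continuous_const).continuousAt.preimage_mem_nhds
    simpa using hM
  have hpos : ∀ᶠ t in 𝓝[>] (0 : ℝ), 0 < t := self_mem_nhdsWithin
  obtain ⟨t, ht, ht0⟩ := (((hsmall.eventually (eventually_smallSets_subset.2 hU)).filter_mono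
    nhdsWithin_le_nhds).and hpos).exists
  refine ⟨t, ht0, ?_⟩
  rw [add_singleton, image_subset_iff]
  exact ht

lemma smul_add_singleton_eq_image {a : ℝ} (ha : a ≠ 0) (v : V) (S : Set V) :
    a • S + {v} = (Homeomorph.smulOfNeZero a ha).trans (Homeomorph.addRight v) '' S := by
  rw [add_singleton, ← image_smul, image_image]
  rfl

lemma interior_smul_add_singleton {a : ℝ} (ha : a ≠ 0) (v : V) (S : Set V) :
    interior (a • S + {v}) = a • interior S + {v} := by
  rw [smul_add_singleton_eq_image ha, smul_add_singleton_eq_image ha, Homeomorph.image_interior]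

lemma frontier_smul_add_singleton {a : ℝ} (ha : a ≠ 0) (v : V) (S : Set V) :
    frontier (a • S + {v}) = a • frontier S + {v} := by
  rw [smul_add_singleton_eq_image ha, smul_add_singleton_eq_image ha, Homeomorph.image_frontier]

lemma smul_smul_add_singleton_add_singleton (a b : ℝ) (v w : V) (S : Set V) :
    a • (b • S + {v}) + {w} = (a * b) • S + {a • v + w} := by
  rw [smul_add, smul_smul, smul_set_singleton, add_assoc, singleton_add_singleton]

end InnerProductSpace

section MinkowskiDifference

variable {n : ℕ}

lemma mem_mdiff {M N : Set (Eucl n)} {x : Eucl n} : x ∈ mdiff M N ↔ ∀ b ∈ N, b + x ∈ M := by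
  simp only [mdiff, mem_ofPred_eq, add_subset_iff, mem_singleton_iff, forall_eq]

lemma subset_mdiff_iff {A M N : Set (Eucl n)} : A ⊆ mdiff M N ↔ N + A ⊆ M := by
  rw [add_subset_iff]
  exact ⟨fun h b hb a ha => mem_mdiff.1 (h ha) b hb,
    fun h a ha => mem_mdiff.2 fun b hb => h b hb a ha⟩

lemma mdiff_mdiff (A B C : Set (Eucl n)) : mdiff (mdiff A B) C = mdiff A (B + C) := by
  ext x
  exact subset_mdiff_iff.trans (by rw [← add_assoc]; rfl)

lemma mdiff_add_singleton (A B : Set (Eucl n)) (y : Eucl n) :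
    mdiff (A + {y}) B = mdiff A B + {y} := by
  ext x
  constructor
  · intro hx
    refine ⟨x - y, mem_mdiff.2 fun b hb => ?_, y, rfl, sub_add_cancel x y⟩
    obtain ⟨a, ha, _, rfl, hab⟩ := mem_mdiff.1 hx b hb
    rwa [← add_sub_assoc, ← hab, add_sub_cancel_right]
  · rintro ⟨z, hz, _, rfl, rfl⟩
    exact mem_mdiff.2 fun b hb => ⟨b + z, mem_mdiff.1 hz b hb, _, rfl, add_assoc _ _ _⟩

lemma mdiff_smul_smul (A B : Set (Eucl n)) {β : ℝ} (hβ : β ≠ 0) :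
    mdiff (β • A) (β • B) = β • mdiff A B := by
  ext x
  rw [mem_smul_set_iff_inv_smul_mem₀ hβ, mem_mdiff, mem_mdiff]
  constructor
  · intro h b hb
    rw [← smul_mem_smul_set_iff₀ hβ, smul_add, smul_inv_smul₀ hβ]
    exact h _ (smul_mem_smul_set hb)
  · rintro h _ ⟨b, hb, rfl⟩
    rw [mem_smul_set_iff_inv_smul_mem₀ hβ, smul_add, inv_smul_smul₀ hβ]
    exact h b hb

lemma mdiff_add_cancel {A B : Set (Eucl n)} (hA : IsClosed A) (hAc : Convex ℝ A)
    (hB : IsCompact B) (hBne : B.Nonempty) : mdiff (A + B) B = A := by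
  refine Subset.antisymm (fun z hz => ?_) (subset_mdiff_iff.2 (add_comm B A).subset)
  by_contra hzA
  obtain ⟨f, u, hfA, hfz⟩ := geometric_hahn_banach_closed_point hAc hA hzA
  obtain ⟨b₀, hb₀, hmax⟩ := hB.exists_isMaxOn hBne f.continuous.continuousOn
  obtain ⟨a, ha, b, hb, hab⟩ := mem_mdiff.1 hz b₀ hb₀
  have h₁ : f a + f b = f b₀ + f z := by rw [← map_add, ← map_add, ← hab]
  have h₂ : f b ≤ f b₀ := hmax hb
  linarith [hfA a ha]

lemma isClosed_mdiff {M : Set (Eucl n)} (hM : IsClosed M) (N : Set (Eucl n)) :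
    IsClosed (mdiff M N) := by
  have : mdiff M N = ⋂ b ∈ N, (b + ·) ⁻¹' M := by
    ext x
    simp [mem_mdiff]
  rw [this]
  exact isClosed_biInter fun b _ => hM.preimage (continuous_const.add continuous_id)

lemma isOpen_mdiff {M N : Set (Eucl n)} (hM : IsOpen M) (hN : IsCompact N) :
    IsOpen (mdiff M N) := by
  refine isOpen_iff_mem_nhds.2 fun x hx => ?_
  have : ∀ᶠ y in 𝓝 x, ∀ b ∈ N, b + y ∈ M :=
    hN.eventually_forall_of_forall_eventually fun b hb =>
      (continuous_snd.add continuous_fst).continuousAt.preimage_mem_nhds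
        (hM.mem_nhds (mem_mdiff.1 hx b hb))
  exact this.mono fun _ => mem_mdiff.2

lemma convex_mdiff {M : Set (Eucl n)} (hM : Convex ℝ M) (N : Set (Eucl n)) :
    Convex ℝ (mdiff M N) := by
  intro z₁ h₁ z₂ h₂ a b ha hb hab
  refine mem_mdiff.2 fun e he => ?_
  convert hM (mem_mdiff.1 h₁ e he) (mem_mdiff.1 h₂ e he) ha hb hab using 1
  rw [smul_add, smul_add, add_add_add_comm, ← add_smul, hab, one_smul]

lemma isCompact_mdiff {M N : Set (Eucl n)} (hM : IsCompact M) (hN : N.Nonempty) :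
    IsCompact (mdiff M N) := by
  obtain ⟨b, hb⟩ := hN
  refine hM.add (isCompact_singleton (x := -b)) |>.of_isClosed_subset (isClosed_mdiff hM.isClosed N) ?_
  exact fun x hx => ⟨b + x, mem_mdiff.1 hx b hb, -b, rfl, add_neg_cancel_comm b x⟩

end MinkowskiDifference

section ParallelBody

variable {n : ℕ}

structure IsConvexBody (K : Set (Eucl n)) : Prop where
  isCompact : IsCompact K
  convex : Convex ℝ K
  interior_nonempty : (interior K).Nonempty

lemma IsConvexBody.nonempty {K : Set (Eucl n)} (hK : IsConvexBody K) : K.Nonempty :=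
  hK.interior_nonempty.mono interior_subset

lemma IsConvexBody.smul_add_singleton {K : Set (Eucl n)} (hK : IsConvexBody K) {a : ℝ}
    (ha : a ≠ 0) (v : Eucl n) : IsConvexBody (a • K + {v}) where
  isCompact := (hK.isCompact.smul a).add isCompact_singleton
  convex := (hK.convex.smul a).add (convex_singleton v)
  interior_nonempty := by
    rw [interior_smul_add_singleton ha]
    exact hK.interior_nonempty.smul_set.add (singleton_nonempty v)

lemma parallelBody_of_nonpos {K E : Set (Eucl n)} {l : ℝ} (hl : l ≤ 0) :
    parallelBody K E l = mdiff K ((-l) • E) := by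
  rw [parallelBody, if_pos hl, abs_of_nonpos hl]

lemma parallelBody_of_pos {K E : Set (Eucl n)} {l : ℝ} (hl : 0 < l) :
    parallelBody K E l = K + l • E := by
  rw [parallelBody, if_neg hl.not_ge]

lemma parallelBody_eq_mdiff {K E : Set (Eucl n)} (hK : IsCompact K) (hKc : Convex ℝ K)
    (hE : IsCompact E) (hEc : Convex ℝ E) (hEne : E.Nonempty) {l₀ l₁ : ℝ} (h : l₀ < l₁) :
    parallelBody K E l₀ = mdiff (parallelBody K E l₁) ((l₁ - l₀) • E) := by
  rcases le_or_gt l₁ 0 with h₁ | h₁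
  · rw [parallelBody_of_nonpos (h.le.trans h₁), parallelBody_of_nonpos h₁, mdiff_mdiff,
      ← hEc.add_smul (by linarith) (by linarith), show -l₁ + (l₁ - l₀) = -l₀ by ring]
  rcases le_or_gt l₀ 0 with h₀ | h₀
  · rw [parallelBody_of_nonpos h₀, parallelBody_of_pos h₁,
      show l₁ - l₀ = l₁ + -l₀ by ring, hEc.add_smul h₁.le (by linarith), ← mdiff_mdiff,
      mdiff_add_cancel hK.isClosed hKc (hE.smul l₁) hEne.smul_set]
  · rw [parallelBody_of_pos h₀, parallelBody_of_pos h₁,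
      show l₁ = l₀ + (l₁ - l₀) by ring, hEc.add_smul h₀.le (by linarith), ← add_assoc,
      add_sub_cancel_left, mdiff_add_cancel (hK.add (hE.smul l₀)).isClosed (hKc.add (hEc.smul l₀))
        (hE.smul _) hEne.smul_set]

lemma isConvexBody_parallelBody {K E : Set (Eucl n)} (hK : IsConvexBody K)
    (hE : IsConvexBody E) {l : ℝ} (hl : -inradius K E < l) : IsConvexBody (parallelBody K E l) := by
  rcases le_or_gt l 0 with h₀ | h₀
  · rw [parallelBody_of_nonpos h₀]
    refine ⟨isCompact_mdiff hK.isCompact hE.nonempty.smul_set, convex_mdiff hK.convex _, ?_⟩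
    obtain ⟨z, hz⟩ := hK.nonempty
    have h0 : (0 : ℝ) ∈ {r : ℝ | 0 ≤ r ∧ ∃ x : Eucl n, r • E + {x} ⊆ K} :=
      ⟨le_rfl, z, by simpa [zero_smul_set hE.nonempty] using hz⟩
    obtain ⟨s, ⟨-, x, hx⟩, hs⟩ := exists_lt_of_lt_csSup ⟨0, h0⟩ (by linarith : -l < inradius K E)
    have hsub : (s + l) • E + {x} ⊆ mdiff K ((-l) • E) := by
      rwa [subset_mdiff_iff, ← add_assoc, ← hE.convex.add_smul (by linarith) (by linarith),
        neg_add_cancel_comm_assoc]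
    refine (Nonempty.mono (interior_mono hsub)) ?_
    rw [interior_smul_add_singleton (by linarith)]
    exact hE.interior_nonempty.smul_set.add (singleton_nonempty x)
  · rw [parallelBody_of_pos h₀]
    refine ⟨hK.isCompact.add (hE.isCompact.smul l), hK.convex.add (hE.convex.smul l), ?_⟩
    obtain ⟨k, hk⟩ := hK.interior_nonempty
    obtain ⟨e, he⟩ := hE.nonempty
    exact ⟨k + l • e, subset_interior_add_left (add_mem_add hk (smul_mem_smul_set he))⟩

end ParallelBody

section TangentialBody

variable {n : ℕ}

lemma isTangentialBody_iff {T E : Set (Eucl n)} :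
    IsTangentialBody T E ↔ E ⊆ T ∧ ∀ p ∈ frontier T, ∃ u : Eucl n, u ≠ 0 ∧
      (∀ x ∈ T, ⟪x, u⟫ ≤ ⟪p, u⟫) ∧ ∃ e ∈ E, ⟪e, u⟫ = ⟪p, u⟫ := by
  refine and_congr_right fun hET => forall₂_congr fun p _ => ⟨?_, ?_⟩
  · rintro ⟨u, hu, _, rfl, ⟨-, hT | hT⟩, ⟨e, he, hep⟩, -⟩
    · exact ⟨u, hu, hT, e, he, hep⟩
    · refine ⟨-u, neg_ne_zero.2 hu, fun x hx => ?_, e, he, ?_⟩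
      · rw [inner_neg_right, inner_neg_right]
        exact neg_le_neg (hT hx)
      · rw [inner_neg_right, inner_neg_right]
        exact congrArg Neg.neg hep
  · rintro ⟨u, hu, hT, e, he, hep⟩
    exact ⟨u, hu, _, rfl, ⟨⟨e, hET he, hep⟩, Or.inl hT⟩,
      ⟨⟨e, he, hep⟩, Or.inl fun x hx => hT x (hET hx)⟩⟩

lemma IsTangentialBody.smul_add_singleton {T E : Set (Eucl n)} (h : IsTangentialBody T E)
    {a : ℝ} (ha : 0 < a) (v : Eucl n) : IsTangentialBody (a • T + {v}) (a • E + {v}) := by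
  obtain ⟨hET, hsupp⟩ := isTangentialBody_iff.1 h
  refine isTangentialBody_iff.2 ⟨add_subset_add_right (smul_set_mono hET), ?_⟩
  rw [frontier_smul_add_singleton ha.ne']
  rintro _ ⟨_, ⟨p, hp, rfl⟩, _, rfl, rfl⟩
  obtain ⟨u, hu, hT, e, he, hep⟩ := hsupp p hp
  refine ⟨u, hu, ?_, _, add_mem_add (smul_mem_smul_set he) rfl, ?_⟩
  · rintro _ ⟨_, ⟨x, hx, rfl⟩, _, rfl, rfl⟩
    simp only [inner_add_left, real_inner_smul_left]
    gcongr
    exact hT x hx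
  · simp only [inner_add_left, real_inner_smul_left, hep]

lemma IsTangentialBody.exists_separating {T E : Set (Eucl n)} (h : IsTangentialBody T E)
    (hT : IsClosed T) (hTi : (interior T).Nonempty) {y : Eucl n} (hy : y ∉ T) :
    ∃ u : Eucl n, ∃ e ∈ E, (∀ x ∈ T, ⟪x, u⟫ ≤ ⟪e, u⟫) ∧ ⟪e, u⟫ < ⟪y, u⟫ := by
  obtain ⟨z, hz⟩ := hTi
  obtain ⟨p, hp_seg, hp⟩ := (convex_segment z y).isPreconnected.inter_frontier_nonempty
    ⟨z, left_mem_segment ℝ z y, interior_subset hz⟩ ⟨y, right_mem_segment ℝ z y, hy⟩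
  obtain ⟨u, hu, hTu, e, he, hep⟩ := (isTangentialBody_iff.1 h).2 p hp
  have hzp : ⟪z, u⟫ < ⟪p, u⟫ := inner_lt_of_mem_interior hu hTu hz
  refine ⟨u, e, he, hep ▸ hTu, hep ▸ ?_⟩
  obtain ⟨a, b, ha, hb, hab, rfl⟩ := hp_seg
  by_contra! hyp
  simp only [inner_add_left, real_inner_smul_left] at hzp hyp
  obtain rfl : b = 1 - a := by linarith
  obtain rfl : a = 0 := le_antisymm (by nlinarith [mul_nonneg hb (sub_nonneg.2 hyp)]) ha
  exact hy (by simpa using hT.frontier_subset hp)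

lemma IsTangentialBody.le_one_of_smul_add_subset {T E : Set (Eucl n)} (h : IsTangentialBody T E)
    (hT : IsCompact T) (hTi : (interior T).Nonempty) (hE : E.Nontrivial) {σ : ℝ} {x : Eucl n}
    (hσ : σ • E + {x} ⊆ T) : σ ≤ 1 := by
  by_contra! hσ₁
  have hmem : ∀ t ∈ T, ∀ e ∈ E, (1 : ℝ) • t + x + (σ - 1) • e ∈ T := by
    intro t ht e he
    by_contra hout
    obtain ⟨u, e₀, he₀, hTu, hsep⟩ := h.exists_separating hT.isClosed hTi hout
    have h₁ := hTu _ (hσ (add_mem_add (smul_mem_smul_set he₀) (mem_singleton x)))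
    have h₂ := hTu e (h.1 he)
    have h₃ := hTu t ht
    simp only [inner_add_left, real_inner_smul_left] at h₁ hsep
    nlinarith
  exact (lt_one_of_forall_smul_add_smul_mem hT (hTi.mono interior_subset) hE (sub_pos.2 hσ₁)
    hmem).false

lemma IsTangentialBody.mdiff_smul_eq {T E : Set (Eucl n)} (h : IsTangentialBody T E)
    (hT : IsClosed T) (hTc : Convex ℝ T) (hTi : (interior T).Nonempty) {s : ℝ} (hs₀ : 0 ≤ s)
    (hs₁ : s < 1) : mdiff T (s • E) = (1 - s) • T := by
  have hs : 0 < 1 - s := by linarith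
  refine Subset.antisymm (fun w hw => ?_) ?_
  · rw [mem_smul_set_iff_inv_smul_mem₀ hs.ne']
    by_contra hout
    obtain ⟨u, e, he, hTu, hsep⟩ := h.exists_separating hT hTi hout
    have h₁ := hTu _ (mem_mdiff.1 hw _ (smul_mem_smul_set he))
    rw [real_inner_smul_left, lt_inv_mul_iff₀ hs] at hsep
    simp only [inner_add_left, real_inner_smul_left] at h₁
    linarith
  · rintro _ ⟨t, ht, rfl⟩
    refine mem_mdiff.2 fun _ ⟨e, he, hb⟩ => hb ▸ ?_
    exact hTc (h.1 he) ht hs₀ hs.le (by ring)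

end TangentialBody

section Homothety

variable {n : ℕ}

lemma homothetic_of_subsingleton [Subsingleton (Eucl n)] {A B : Set (Eucl n)} (hA : A.Nonempty)
    (hB : B.Nonempty) : Homothetic A B :=
  ⟨1, one_pos, 0, hA.eq_univ.trans (hB.smul_set.add (singleton_nonempty 0)).eq_univ.symm⟩

lemma homothetic_mdiff_of_isTangentialBody {T E L : Set (Eucl n)} (hT : IsConvexBody T)
    (hE : IsCompact E) (hEc : Convex ℝ E) (hEn : E.Nontrivial) (hTE : IsTangentialBody T E)
    {β : ℝ} (hβ : 0 < β) {y : Eucl n} (hL : L = β • T + {y}) {δ : ℝ} (hδ : 0 < δ)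
    (hi : (interior (mdiff L (δ • E))).Nonempty) : Homothetic (mdiff L (δ • E)) L := by
  set s := δ / β
  have hs : 0 < s := div_pos hδ hβ
  have hLδ : mdiff L (δ • E) = β • mdiff T (s • E) + {y} := by
    rw [hL, mdiff_add_singleton, ← mdiff_smul_smul _ _ hβ.ne', smul_smul, mul_div_cancel₀ _ hβ.ne']
  have hs₁ : s < 1 := by
    rw [hLδ, interior_smul_add_singleton hβ.ne'] at hi
    obtain ⟨_, ⟨_, ⟨w, hw, rfl⟩, _, -, rfl⟩⟩ := hi
    obtain ⟨t, ht, htw⟩ :=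
      exists_pos_smul_add_singleton_subset hE.isBounded (mem_interior_iff_mem_nhds.1 hw)
    have hsub : (s + t) • E + {w} ⊆ T := by
      rw [hEc.add_smul hs.le ht.le, add_assoc, ← subset_mdiff_iff]
      exact htw
    linarith [hTE.le_one_of_smul_add_subset hT.isCompact hT.interior_nonempty hEn hsub]
  refine ⟨1 - s, by linarith, s • y, ?_⟩
  rw [hLδ, hTE.mdiff_smul_eq hT.isCompact.isClosed hT.convex hT.interior_nonempty hs.le hs₁, hL,
    smul_smul_add_singleton_add_singleton, smul_smul, mul_comm]
  congr 2
  module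

lemma forall_smul_add_smul_mem_of_subset_mdiff {L E : Set (Eucl n)} {α δ : ℝ} {x : Eucl n}
    (h : α • L + {x} ⊆ mdiff L (δ • E)) : ∀ p ∈ L, ∀ e ∈ E, α • p + x + δ • e ∈ L := by
  intro p hp e he
  rw [add_comm]
  exact mem_mdiff.1 (h (add_mem_add (smul_mem_smul_set hp) (mem_singleton x))) _
    (smul_mem_smul_set he)

lemma exists_support_of_mdiff_eq {L E : Set (Eucl n)} (hL : IsConvexBody L) (hE : IsCompact E)
    {α δ : ℝ} (hα : 0 < α) {x : Eucl n} (hLδ : mdiff L (δ • E) = α • L + {x}) {q : Eucl n}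
    (hq : q ∈ frontier L) : ∃ u : Eucl n, u ≠ 0 ∧ (∀ z ∈ L, ⟪z, u⟫ ≤ ⟪q, u⟫) ∧
      ∃ e ∈ E, ⟪q, u⟫ = α * ⟪q, u⟫ + ⟪x, u⟫ + δ * ⟪e, u⟫ := by
  have hstep := forall_smul_add_smul_mem_of_subset_mdiff hLδ.ge
  have hqL : q ∈ L := hL.isCompact.isClosed.frontier_subset hq
  obtain ⟨e, he, hpe⟩ : ∃ e ∈ E, α • q + x + δ • e ∉ interior L := by
    by_contra! hall
    have hint : α • q + x ∈ interior (mdiff L (δ • E)) := by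
      refine interior_maximal (fun y hy => mem_mdiff.2 fun b hb => interior_subset
        (mem_mdiff.1 hy b hb)) (isOpen_mdiff isOpen_interior (hE.smul δ)) (mem_mdiff.2 ?_)
      rintro _ ⟨e, he, rfl⟩
      rw [add_comm]
      exact hall e he
    rw [hLδ, interior_smul_add_singleton hα.ne'] at hint
    obtain ⟨_, ⟨q', hq', rfl⟩, _, rfl, hqq'⟩ := hint
    rw [smul_right_injective _ hα.ne' (add_right_cancel hqq')] at hq'
    exact hq.2 hq'
  obtain ⟨u, hu, hLu⟩ := hL.convex.exists_inner_le_of_notMem_interior hL.interior_nonempty hpe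
  have hmax : ∀ z ∈ L, ⟪z, u⟫ ≤ ⟪q, u⟫ := by
    intro z hz
    have h₁ := hLu _ (hstep z hz e he)
    simp only [inner_add_left, real_inner_smul_left] at h₁
    exact le_of_mul_le_mul_left (by linarith) hα
  refine ⟨u, hu, hmax, e, he, ?_⟩
  have h₁ := hLu q hqL
  have h₂ := hmax _ (hstep q hqL e he)
  simp only [inner_add_left, real_inner_smul_left] at h₁ h₂
  linarith

lemma exists_isTangentialBody_of_mdiff_eq {L E : Set (Eucl n)} (hL : IsConvexBody L)
    (hE : IsCompact E) (hEn : E.Nontrivial) {α δ : ℝ} (hα : 0 < α) (hδ : 0 < δ) {x : Eucl n}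
    (hLδ : mdiff L (δ • E) = α • L + {x}) :
    ∃ T, IsConvexBody T ∧ IsTangentialBody T E ∧ Homothetic L T := by
  have hstep := forall_smul_add_smul_mem_of_subset_mdiff hLδ.ge
  have hα₁ : α < 1 := lt_one_of_forall_smul_add_smul_mem hL.isCompact hL.nonempty hEn hδ hstep
  have h1α : 0 < 1 - α := sub_pos.2 hα₁
  set ρ := δ / (1 - α)
  set c := (1 - α)⁻¹ • x
  have hρ : 0 < ρ := div_pos hδ h1α
  -- `ρ • e + c` is the fixed point of the contraction `p ↦ α • p + x + δ • e`
  have hEL : ρ • E + {c} ⊆ L := by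
    rintro _ ⟨_, ⟨e, he, rfl⟩, _, rfl, rfl⟩
    refine mem_of_forall_add_smul_sub_mem hL.isCompact.isClosed hL.nonempty hα.le hα₁ fun p hp => ?_
    convert hstep p hp e he using 1
    simp only [ρ, c]
    match_scalars <;> field_simp [h1α.ne'] <;> ring
  have htang : IsTangentialBody L (ρ • E + {c}) := by
    refine isTangentialBody_iff.2 ⟨hEL, fun q hq => ?_⟩
    obtain ⟨u, hu, hmax, e, he, hqe⟩ := exists_support_of_mdiff_eq hL hE hα hLδ hq
    refine ⟨u, hu, hmax, ρ • e + c, add_mem_add (smul_mem_smul_set he) rfl, ?_⟩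
    simp only [inner_add_left, real_inner_smul_left, ρ, c]
    field_simp [h1α.ne']
    linarith
  refine ⟨ρ⁻¹ • L + {-(ρ⁻¹ • c)}, hL.smul_add_singleton (inv_ne_zero hρ.ne') _, ?_, ρ, hρ, c, ?_⟩
  · convert htang.smul_add_singleton (inv_pos.2 hρ) (-(ρ⁻¹ • c))
    rw [smul_smul_add_singleton_add_singleton, inv_mul_cancel₀ hρ.ne', one_smul, add_neg_cancel,
      singleton_zero, add_zero]
  · rw [smul_smul_add_singleton_add_singleton, mul_inv_cancel₀ hρ.ne', one_smul, smul_neg,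
      smul_inv_smul₀ hρ.ne', neg_add_cancel, singleton_zero, add_zero]

end Homothety

/-- K_{λ₀} is homothetic to K_{λ₁} iff K_{λ₁} is homothetic to
a tangential body of E. -/
theorem statement6 {n : ℕ} (K E : Set (Eucl n))
    (hKcomp : IsCompact K) (hKconv : Convex ℝ K) (hKint : (interior K).Nonempty)
    (hEcomp : IsCompact E) (hEconv : Convex ℝ E) (hEint : (interior E).Nonempty)
    (l₀ l₁ : ℝ) (hl₀ : -(inradius K E) < l₀) (hl₀₁ : l₀ < l₁) :
    Homothetic (parallelBody K E l₀) (parallelBody K E l₁) ↔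
      ∃ T : Set (Eucl n), IsCompact T ∧ Convex ℝ T ∧ (interior T).Nonempty ∧
        IsTangentialBody T E ∧ Homothetic (parallelBody K E l₁) T := by
  have hK : IsConvexBody K := ⟨hKcomp, hKconv, hKint⟩
  have hE : IsConvexBody E := ⟨hEcomp, hEconv, hEint⟩
  have hL := isConvexBody_parallelBody hK hE (hl₀.trans hl₀₁)
  have hP := isConvexBody_parallelBody hK hE hl₀
  rcases subsingleton_or_nontrivial (Eucl n) with _ | _
  · refine iff_of_true (homothetic_of_subsingleton hP.nonempty hL.nonempty) ⟨univ,
      subsingleton_univ.isCompact, convex_univ, by simp, ⟨subset_univ E, by simp⟩,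
      homothetic_of_subsingleton hL.nonempty univ_nonempty⟩
  have hEn := nontrivial_of_interior_nonempty hEint
  have hδ : 0 < l₁ - l₀ := sub_pos.2 hl₀₁
  rw [parallelBody_eq_mdiff hKcomp hKconv hEcomp hEconv hE.nonempty hl₀₁] at hP ⊢
  constructor
  · rintro ⟨α, hα, x, hLδ⟩
    obtain ⟨T, hT, hTE, hLT⟩ := exists_isTangentialBody_of_mdiff_eq hL hEcomp hEn hα hδ hLδ
    exact ⟨T, hT.isCompact, hT.convex, hT.interior_nonempty, hTE, hLT⟩
  · rintro ⟨T, hTcomp, hTconv, hTint, hTE, β, hβ, y, hLT⟩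
    exact homothetic_mdiff_of_isTangentialBody ⟨hTcomp, hTconv, hTint⟩ hEcomp hEconv hEn hTE hβ
      hLT hδ hP.interior_nonempty
end

section
/- Let K and E be full-dimensional convex bodies in ℝⁿ and let Ω ⊆ S^{n−1} determine K. Then for every λ ∈ [−r(K;E), 0], the inner parallel body satisfies K ∼ |λ|E = ⋂_{u ∈ Ω} H⁻_{u, h_K(u) + λ·h_E(u)}. -/
open scoped Pointwise RealInnerProductSpace
open Metric MeasureTheory

/-! Translating `N` inside a halfspace only constrains the height of `N` in direction `u`, so the
Minkowski difference of a halfspace is again a halfspace, lowered by `h_N(u)`. Since `Ω` determines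
`K`, `K` is an intersection of such halfspaces, and `· ∼ N` commutes with intersections. -/

section InnerParallelBody

variable {n : ℕ}

theorem mem_mdiff_iff {M N : Set (Eucl n)} {x : Eucl n} : x ∈ mdiff M N ↔ ∀ y ∈ N, y + x ∈ M := by
  rw [mdiff, Set.mem_ofPred_eq, Set.add_singleton, Set.image_subset_iff]
  rfl

theorem mdiff_biInter {ι : Type*} (s : Set ι) (M : ι → Set (Eucl n)) (N : Set (Eucl n)) :
    mdiff (⋂ i ∈ s, M i) N = ⋂ i ∈ s, mdiff (M i) N := by
  ext x
  simp only [mem_mdiff_iff, Set.mem_iInter]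
  exact ⟨fun h i hi y hy => h y hy i hi, fun h y hy i hi => h i hi y hy⟩

theorem suppFn_smul {c : ℝ} (hc : 0 ≤ c) (E : Set (Eucl n)) (u : Eucl n) :
    suppFn (c • E) u = c * suppFn E u := by
  unfold suppFn
  rw [Set.image_smul_comm _ _ _ fun x => real_inner_smul_left x u c,
    Real.sSup_smul_of_nonneg hc, smul_eq_mul]

theorem mdiff_halfspace {N : Set (Eucl n)} {u : Eucl n}
    (hN : N.Nonempty) (hbdd : BddAbove ((fun x => ⟪x, u⟫) '' N)) (α : ℝ) :
    mdiff (halfspace u α) N = halfspace u (α - suppFn N u) := by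
  ext x
  simp only [mem_mdiff_iff, halfspace, Set.mem_ofPred_eq, inner_add_left]
  rw [le_sub_comm, suppFn, csSup_le_iff hbdd (hN.image _), Set.forall_mem_image]
  simp only [le_sub_iff_add_le]

end InnerParallelBody

theorem statement10_general {n : ℕ} (K E : Set (Eucl n))
    (hEcomp : IsCompact E) (hEint : (interior E).Nonempty)
    (Ω : Set (Eucl n)) (hΩdet : Determines Ω K)
    (l : ℝ) (hl₁ : l ≤ 0) :
    mdiff K (|l| • E) = ⋂ u ∈ Ω, halfspace u (suppFn K u + l * suppFn E u) := by
  have hE : IsCompact (|l| • E) := hEcomp.smul _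
  have hEne : (|l| • E).Nonempty := (hEint.mono interior_subset).smul_set
  conv_lhs => rw [hΩdet]
  rw [mdiff_biInter]
  refine Set.iInter₂_congr fun u _ => ?_
  rw [mdiff_halfspace hEne (hE.image (continuous_id.inner continuous_const)).bddAbove,
    suppFn_smul (abs_nonneg l), abs_of_nonpos hl₁, neg_mul, sub_neg_eq_add]

/-- If Ω ⊆ S^{n−1} determines K, then for λ ∈ [−r(K;E), 0],
K ∼ |λ|E = ⋂_{u ∈ Ω} H⁻_{u, h_K(u) + λ h_E(u)}. -/
theorem statement10 {n : ℕ} (K E : Set (Eucl n))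
    (hKcomp : IsCompact K) (hKconv : Convex ℝ K) (hKint : (interior K).Nonempty)
    (hEcomp : IsCompact E) (hEconv : Convex ℝ E) (hEint : (interior E).Nonempty)
    (Ω : Set (Eucl n)) (hΩsph : Ω ⊆ sphere (0 : Eucl n) 1) (hΩdet : Determines Ω K)
    (l : ℝ) (hl₀ : -(inradius K E) ≤ l) (hl₁ : l ≤ 0) :
    mdiff K (|l| • E) = ⋂ u ∈ Ω, halfspace u (suppFn K u + l * suppFn E u) :=
  statement10_general K E hEcomp hEint Ω hΩdet l hl₁
end

section
/- Let K and E be full-dimensional convex bodies in ℝⁿ and let Ω ⊆ S^{n−1} determine K, with the convex hull of Ω containing the origin in its interior. Then for every λ ∈ [−r(K;E), 0], the inner parallel bodies of K relative to E and relative to E^Ω coincide: K ∼ |λ|E = K ∼ |λ|E^Ω. -/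
open scoped Pointwise RealInnerProductSpace
open Metric MeasureTheory

/-!
Because `Ω` determines `K`, a point lies in `K` once its inner product with every `u ∈ Ω` is at
most `h_K(u)`. If `a • E + x ⊆ K` with `a ≥ 0`, then `a h_E(u) + ⟨x, u⟩ ≤ h_K(u)`, and every
point of `a • E^Ω + x` obeys these bounds because `E^Ω` is cut out by the halfspaces
`⟨·, u⟩ ≤ h_E(u)`, `u ∈ Ω`. Conversely `E ⊆ E^Ω`.
-/

open Set

variable {n : ℕ}

theorem subset_tangBody {E : Set (Eucl n)} (hE : IsCompact E) (Ω : Set (Eucl n)) :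
    E ⊆ tangBody E Ω := fun z hz =>
  mem_iInter₂.2 fun u _ => show ⟪z, u⟫ ≤ suppFn E u from
    le_csSup (hE.image (continuous_id.inner continuous_const)).bddAbove ⟨z, hz, rfl⟩

theorem mdiff_anti_right {M N N' : Set (Eucl n)} (h : N ⊆ N') : mdiff M N' ⊆ mdiff M N :=
  fun _ hx => (add_subset_add_right h).trans hx

theorem mul_suppFn_add_inner_le {K E : Set (Eucl n)} {a : ℝ} {x u : Eucl n} (ha : 0 ≤ a)
    (hE : E.Nonempty) (hK : BddAbove ((fun y => ⟪y, u⟫) '' K)) (hx : a • E + {x} ⊆ K) :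
    a * suppFn E u + ⟪x, u⟫ ≤ suppFn K u := by
  rw [← le_sub_iff_add_le, suppFn, ← smul_eq_mul, ← Real.sSup_smul_of_nonneg ha]
  refine csSup_le (hE.image _).smul_set ?_
  rintro _ ⟨_, ⟨z, hz, rfl⟩, rfl⟩
  dsimp only
  rw [le_sub_iff_add_le, smul_eq_mul, ← real_inner_smul_left, ← inner_add_left]
  exact le_csSup hK ⟨_, hx (add_mem_add (smul_mem_smul_set hz) rfl), rfl⟩

theorem smul_tangBody_add_singleton_subset {K E Ω : Set (Eucl n)} {a : ℝ} {x : Eucl n}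
    (hK : IsCompact K) (hΩ : Determines Ω K) (hE : E.Nonempty) (ha : 0 ≤ a)
    (hx : a • E + {x} ⊆ K) : a • tangBody E Ω + {x} ⊆ K := by
  rintro _ ⟨_, ⟨y, hy, rfl⟩, x, rfl, rfl⟩
  rw [hΩ]
  refine mem_iInter₂.2 fun u hu => ?_
  have hyu : ⟪y, u⟫ ≤ suppFn E u := mem_iInter₂.1 hy u hu
  have hKu : BddAbove ((fun y => ⟪y, u⟫) '' K) :=
    (hK.image (continuous_id.inner continuous_const)).bddAbove
  calc ⟪a • y + x, u⟫ = a * ⟪y, u⟫ + ⟪x, u⟫ := by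
        rw [inner_add_left, real_inner_smul_left]
    _ ≤ a * suppFn E u + ⟪x, u⟫ := by gcongr
    _ ≤ suppFn K u := mul_suppFn_add_inner_le ha hE hKu hx

theorem statement12_general {n : ℕ} (K E : Set (Eucl n))
    (hKcomp : IsCompact K)
    (hEcomp : IsCompact E) (hEint : (interior E).Nonempty)
    (Ω : Set (Eucl n)) (hΩdet : Determines Ω K)
    (l : ℝ) :
    mdiff K (|l| • E) = mdiff K (|l| • tangBody E Ω) :=
  Subset.antisymm
    (fun _ hx => smul_tangBody_add_singleton_subset hKcomp hΩdet
      (hEint.mono interior_subset) (abs_nonneg l) hx)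
    (mdiff_anti_right (smul_set_mono (subset_tangBody hEcomp Ω)))

/-- For λ ∈ [−r(K;E), 0], the inner parallel bodies of K relative to E
and relative to E^Ω coincide: K ∼ |λ|E = K ∼ |λ|E^Ω. -/
theorem statement12 {n : ℕ} (K E : Set (Eucl n))
    (hKcomp : IsCompact K) (hKconv : Convex ℝ K) (hKint : (interior K).Nonempty)
    (hEcomp : IsCompact E) (hEconv : Convex ℝ E) (hEint : (interior E).Nonempty)
    (Ω : Set (Eucl n)) (hΩsph : Ω ⊆ sphere (0 : Eucl n) 1) (hΩdet : Determines Ω K)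
    (hΩhull : (0 : Eucl n) ∈ interior (convexHull ℝ Ω))
    (l : ℝ) (hl₀ : -(inradius K E) ≤ l) (hl₁ : l ≤ 0) :
    mdiff K (|l| • E) = mdiff K (|l| • tangBody E Ω) :=
  statement12_general K E hKcomp hEcomp hEint Ω hΩdet l
end

section
/- Let K and E be full-dimensional convex bodies in ℝⁿ and let Ω ⊆ S^{n−1} determine K. Then for every λ > 0 the support function of the Wulff shape K(Ω,λ) satisfies h_{K(Ω,λ)}(u) = h_K(u) + λ·h_E(u) for all u ∈ Ω. -/
open scoped Pointwise RealInnerProductSpace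
open Metric MeasureTheory

/-!
Pick maximisers `x ∈ K` and `y ∈ E` of `⟪·, u⟫`. The point `x + λ y` satisfies every constraint
of the Wulff shape, since `⟪x, v⟫ ≤ h_K(v)` and `⟪y, v⟫ ≤ h_E(v)` for all `v`, and it lies on the
bounding hyperplane of the constraint with normal `u`; hence that constraint is attained.
-/

section SupportFunction

variable {n : ℕ}

theorem suppFn_eq_of_mem_of_subset_halfspace {S : Set (Eucl n)} {u x : Eucl n} {α : ℝ}
    (hx : x ∈ S) (hS : S ⊆ halfspace u α) (hxα : ⟪x, u⟫ = α) : suppFn S u = α :=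
  IsGreatest.csSup_eq ⟨⟨x, hx, hxα⟩, by rintro _ ⟨y, hy, rfl⟩; exact hS hy⟩

theorem IsCompact.inner_le_suppFn {K : Set (Eucl n)} (hK : IsCompact K) {x : Eucl n}
    (hx : x ∈ K) (u : Eucl n) : ⟪x, u⟫ ≤ suppFn K u :=
  le_csSup (hK.bddAbove_image (by fun_prop : Continuous (⟪·, u⟫)).continuousOn) ⟨x, hx, rfl⟩

theorem IsCompact.exists_suppFn_eq_inner {K : Set (Eucl n)} (hK : IsCompact K)
    (hne : K.Nonempty) (u : Eucl n) : ∃ x ∈ K, suppFn K u = ⟪x, u⟫ := by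
  obtain ⟨x, hx, hmax⟩ :=
    hK.exists_isMaxOn hne (by fun_prop : Continuous (⟪·, u⟫)).continuousOn
  exact ⟨x, hx, suppFn_eq_of_mem_of_subset_halfspace hx (fun y hy => hmax hy) rfl⟩

end SupportFunction

section WulffShape

variable {n : ℕ} {K E Ω : Set (Eucl n)} {l : ℝ}

theorem wulff_subset_halfspace {u : Eucl n} (hu : u ∈ Ω) :
    wulff K E Ω l ⊆ halfspace u (suppFn K u + l * suppFn E u) :=
  Set.biInter_subset_of_mem hu

theorem add_smul_mem_wulff (hK : IsCompact K) (hE : IsCompact E) (hl : 0 ≤ l) {x y : Eucl n}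
    (hx : x ∈ K) (hy : y ∈ E) : x + l • y ∈ wulff K E Ω l := by
  refine Set.mem_iInter₂.2 fun v _ => ?_
  change ⟪x + l • y, v⟫ ≤ _
  rw [inner_add_left, real_inner_smul_left]
  exact add_le_add (hK.inner_le_suppFn hx v)
    (mul_le_mul_of_nonneg_left (hE.inner_le_suppFn hy v) hl)

end WulffShape

theorem statement14_general {n : ℕ} (K E : Set (Eucl n))
    (hKcomp : IsCompact K) (hKint : (interior K).Nonempty)
    (hEcomp : IsCompact E) (hEint : (interior E).Nonempty)
    (Ω : Set (Eucl n))
    (l : ℝ) (hl : 0 < l) :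
    ∀ u ∈ Ω, suppFn (wulff K E Ω l) u = suppFn K u + l * suppFn E u := by
  intro u hu
  obtain ⟨x, hxK, hx⟩ := hKcomp.exists_suppFn_eq_inner (hKint.mono interior_subset) u
  obtain ⟨y, hyE, hy⟩ := hEcomp.exists_suppFn_eq_inner (hEint.mono interior_subset) u
  refine suppFn_eq_of_mem_of_subset_halfspace (add_smul_mem_wulff hKcomp hEcomp hl.le hxK hyE)
    (wulff_subset_halfspace hu) ?_
  rw [inner_add_left, real_inner_smul_left, hx, hy]

/-- For λ > 0 and u ∈ Ω, h_{K(Ω,λ)}(u) = h_K(u) + λ h_E(u). -/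
theorem statement14 {n : ℕ} (K E : Set (Eucl n))
    (hKcomp : IsCompact K) (hKconv : Convex ℝ K) (hKint : (interior K).Nonempty)
    (hEcomp : IsCompact E) (hEconv : Convex ℝ E) (hEint : (interior E).Nonempty)
    (Ω : Set (Eucl n)) (hΩsph : Ω ⊆ sphere (0 : Eucl n) 1) (hΩdet : Determines Ω K)
    (l : ℝ) (hl : 0 < l) :
    ∀ u ∈ Ω, suppFn (wulff K E Ω l) u = suppFn K u + l * suppFn E u :=
  statement14_general K E hKcomp hKint hEcomp hEint Ω l hl
end
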